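/- arXiv:2604.03840 — 3 statements merged into one kernel-verified Lean document; each statement's English description precedes it below -/
import Mathlib

section
/- Let L ≥ 2 be a natural number, b > 0 real, ρ : Fin L → ℝ strictly increasing with ρ_0 = 0 and ρ_{L-1} = 1, and c : Fin L → ℝ. The functions P̃_y(z) = exp(c_y + ρ_y·b·z)/(1+e^z)^b sum to 1 over y for all real z if and only if b = L-1, ρ_y = y/(L-1), and c_y = log(binomial(L-1, y)). -/
open Filter Finset Topology Real Asymptotics

/-! With `t = exp z`, the condition reads `∑ y, A y * t ^ β y = (1 + t) ^ b` for `t > 0`, with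
`A y = exp (c y) > 0` and strictly increasing exponents `β y = ρ y * b ≤ b`. Compare both sides
as `t → 0⁺` with the binomial series `∑ Ring.choose b j * t ^ j`, by induction on `k`: once
`β j = j` and `A j = Ring.choose b j` for `j < k`, the remainder `R` obtained by removing the first
`k` terms satisfies `R t / t ^ β k → A k > 0` and `R t / t ^ k → Ring.choose b k`, which is
positive because `b ≥ β k`. Either limit would vanish if `β k ≠ k`, so `β k = k` and then
`A k = Ring.choose b k`. The last index gives `b = L - 1`. -/

theorem HasFPowerSeriesAt.tendsto_smul_sub_partialSum {𝕜 E : Type*} [NontriviallyNormedField 𝕜]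
    [NormedAddCommGroup E] [NormedSpace 𝕜 E] {f : 𝕜 → E} {p : FormalMultilinearSeries 𝕜 𝕜 E}
    (hf : HasFPowerSeriesAt f p 0) (n : ℕ) :
    Tendsto (fun t => (t ^ n)⁻¹ • (f t - p.partialSum n t)) (𝓝[≠] 0) (𝓝 (p.coeff n)) := by
  have hO : (fun t => f t - p.partialSum (n + 1) t) =O[𝓝[≠] 0] fun t => t ^ (n + 1) := by
    simpa [← norm_pow] using (hf.isBigO_sub_partialSum_pow (n + 1)).mono nhdsWithin_le_nhds
  have hrem : Tendsto (fun t => (t ^ n)⁻¹ • (f t - p.partialSum (n + 1) t)) (𝓝[≠] 0) (𝓝 0) := by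
    refine ((isBigO_refl (fun t : 𝕜 => (t ^ n)⁻¹) _).smul hO).trans_tendsto ?_
    refine (tendsto_nhdsWithin_of_tendsto_nhds tendsto_id).congr' ?_
    filter_upwards [self_mem_nhdsWithin] with t (ht : t ≠ 0)
    simp [pow_succ, ht]
  simpa using (hrem.add_const (p.coeff n)).congr' <| by
    filter_upwards [self_mem_nhdsWithin] with t (ht : t ≠ 0)
    simp only [FormalMultilinearSeries.partialSum, sum_range_succ,
      FormalMultilinearSeries.apply_eq_pow_smul_coeff, smul_sub, smul_add, smul_smul,
      inv_mul_cancel₀ (pow_ne_zero n ht), one_smul]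
    abel

theorem Real.tendsto_one_add_rpow_sub_sum_div_pow (b : ℝ) (n : ℕ) :
    Tendsto (fun t => ((1 + t) ^ b - ∑ j ∈ range n, Ring.choose b j * t ^ j) / t ^ n)
      (𝓝[≠] 0) (𝓝 (Ring.choose b n)) := by
  simpa only [FormalMultilinearSeries.partialSum, FormalMultilinearSeries.coeff,
    binomialSeries_apply, List.prod_ofFn, Fin.prod_const, Pi.one_apply, prod_const_one,
    smul_eq_mul, mul_one, inv_mul_eq_div] using
    (one_add_rpow_hasFPowerSeriesAt_zero (a := b)).tendsto_smul_sub_partialSum n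

theorem Ring.choose_pos_of_natCast_sub_one_lt {K : Type*} [Field K] [LinearOrder K]
    [IsStrictOrderedRing K] {b : K} {k : ℕ} (h : (k : K) - 1 < b) : 0 < Ring.choose b k := by
  have hpos := descPochhammer_pos h
  rw [← descPochhammer_map (algebraMap ℤ K), Polynomial.eval_map_algebraMap,
    Polynomial.aeval_eq_smeval] at hpos
  rw [Ring.choose_eq_smul, smul_eq_mul]
  positivity

theorem Real.tendsto_rpow_nhds_zero_of_pos {γ : ℝ} (hγ : 0 < γ) :
    Tendsto (fun t : ℝ => t ^ γ) (𝓝 0) (𝓝 0) := by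
  simpa [zero_rpow hγ.ne'] using (continuousAt_rpow_const 0 γ (Or.inr hγ.le)).tendsto

theorem Real.tendsto_sum_mul_rpow_nhds_zero {ι : Type*} (s : Finset ι) (A γ : ι → ℝ)
    (hγ : ∀ i ∈ s, 0 < γ i) : Tendsto (fun t : ℝ => ∑ i ∈ s, A i * t ^ γ i) (𝓝 0) (𝓝 0) := by
  simpa using tendsto_finsetSum s fun i hi =>
    (tendsto_rpow_nhds_zero_of_pos (hγ i hi)).const_mul (A i)

theorem Real.tendsto_div_rpow_nhdsGT_zero_of_lt {F : ℝ → ℝ} {a γ δ : ℝ}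
    (h : Tendsto (fun t => F t / t ^ δ) (𝓝[>] 0) (𝓝 a)) (hγδ : γ < δ) :
    Tendsto (fun t => F t / t ^ γ) (𝓝[>] 0) (𝓝 0) := by
  have hpow := (tendsto_rpow_nhds_zero_of_pos (sub_pos.2 hγδ)).mono_left
    (nhdsWithin_le_nhds (s := Set.Ioi 0))
  simpa using (h.mul hpow).congr' <| by
    filter_upwards [self_mem_nhdsWithin] with t (ht : 0 < t)
    rw [rpow_sub ht]
    field_simp

theorem eq_natCast_and_eq_choose_of_sum_mul_rpow_eq_one_add_rpow {L : ℕ} {A β : Fin L → ℝ}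
    {b : ℝ} (hA : ∀ n, 0 < A n) (hβ : StrictMono β) (hβb : ∀ n, β n ≤ b)
    (h : ∀ t > 0, ∑ n, A n * t ^ β n = (1 + t) ^ b) (n : Fin L) :
    β n = n ∧ A n = Ring.choose b n := by
  induction n using WellFoundedLT.induction with
  | _ k ih =>
  set R : ℝ → ℝ := fun t => (1 + t) ^ b - ∑ j ∈ range k, Ring.choose b j * t ^ j
  have hR : ∀ t > 0, R t = ∑ n ∈ Ici k, A n * t ^ β n := by
    intro t ht
    have hlow : ∑ n ∈ Iio k, A n * t ^ β n = ∑ j ∈ range k, Ring.choose b j * t ^ j := by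
      rw [← Nat.Iio_eq_range, ← Fin.map_valEmbedding_Iio, sum_map]
      refine sum_congr rfl fun j hj => ?_
      obtain ⟨hβj, hAj⟩ := ih j (mem_Iio.1 hj)
      simp [hβj, hAj]
    have hcompl : (Ici k)ᶜ = Iio k := by ext; simp
    simp only [R]
    rw [← h t ht, ← hlow, ← sum_compl_add_sum (Ici k), hcompl, add_sub_cancel_left]
  have hdom : Tendsto (fun t => R t / t ^ β k) (𝓝[>] 0) (𝓝 (A k)) := by
    have hlim := (tendsto_sum_mul_rpow_nhds_zero (Ioi k) A (fun n => β n - β k)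
      fun n hn => sub_pos.2 (hβ (mem_Ioi.1 hn))).const_add (A k)
    rw [add_zero] at hlim
    refine (hlim.mono_left nhdsWithin_le_nhds).congr' ?_
    filter_upwards [self_mem_nhdsWithin] with t (ht : 0 < t)
    rw [hR t ht, ← sum_Ioi_add_eq_sum_Ici, add_div, sum_div, add_comm,
      mul_div_cancel_right₀ _ (rpow_pos_of_pos ht _).ne']
    congr 1
    exact sum_congr rfl fun n _ => by rw [rpow_sub ht, mul_div_assoc]
  have htaylor : Tendsto (fun t => R t / t ^ (k : ℝ)) (𝓝[>] 0) (𝓝 (Ring.choose b k)) := by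
    simpa [R] using (tendsto_one_add_rpow_sub_sum_div_pow b k).mono_left (nhdsGT_le_nhdsNE 0)
  have hβk : β k = k := by
    refine le_antisymm (not_lt.1 fun hlt => ?_) (not_lt.1 fun hlt => ?_)
    · have hzero := tendsto_nhds_unique (tendsto_div_rpow_nhdsGT_zero_of_lt hdom hlt) htaylor
      exact (Ring.choose_pos_of_natCast_sub_one_lt (by linarith [hβb k])).ne hzero
    · exact (hA k).ne (tendsto_nhds_unique (tendsto_div_rpow_nhdsGT_zero_of_lt htaylor hlt) hdom)
  exact ⟨hβk, tendsto_nhds_unique (hβk ▸ hdom) htaylor⟩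

theorem sum_exp_mul_rpow_eq_one_add_rpow {ι : Type*} [Fintype ι] {c β : ι → ℝ} {b : ℝ}
    (h : ∀ z, ∑ y, exp (c y + β y * z) / (1 + exp z) ^ b = 1) {t : ℝ} (ht : 0 < t) :
    ∑ y, exp (c y) * t ^ β y = (1 + t) ^ b := by
  have hz := h (log t)
  rw [exp_log ht, ← sum_div, div_eq_one_iff_eq (by positivity)] at hz
  rw [← hz]
  exact sum_congr rfl fun y _ => by rw [rpow_def_of_pos ht, ← exp_add, mul_comm (log t)]

theorem Fin.sum_choose_pred_mul_pow {R : Type*} [CommSemiring R] {L : ℕ} (hL : 0 < L) (x : R) :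
    ∑ y : Fin L, ((L - 1).choose y : R) * x ^ (y : ℕ) = (1 + x) ^ (L - 1) := by
  rw [Fin.sum_univ_eq_sum_range (fun n => ((L - 1).choose n : R) * x ^ n), add_comm, add_pow,
    Nat.sub_add_cancel hL]
  simp [mul_comm]

theorem elo_model_characterization (L : ℕ) (hL : 2 ≤ L) (b : ℝ) (hb : 0 < b)
    (ρ : Fin L → ℝ) (hρ : StrictMono ρ)
    (hρlast : ρ ⟨L - 1, by omega⟩ = 1)
    (c : Fin L → ℝ) :
    (∀ z : ℝ, ∑ y : Fin L,
        Real.exp (c y + ρ y * b * z) / (1 + Real.exp z) ^ b = 1)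
      ↔ (b = L - 1 ∧ (∀ y : Fin L, ρ y = (y : ℝ) / (L - 1))
          ∧ (∀ y : Fin L, c y = Real.log (Nat.choose (L - 1) y))) := by
  have hL1 : ((L - 1 : ℕ) : ℝ) = L - 1 := by rw [Nat.cast_sub (by omega), Nat.cast_one]
  have hL1pos : (0 : ℝ) < L - 1 := by rw [← hL1]; exact_mod_cast (by omega : 0 < L - 1)
  constructor
  · intro h
    have hρle : ∀ y, ρ y * b ≤ b := fun y => by
      simpa [hρlast] using mul_le_mul_of_nonneg_right
        (hρ.monotone (show y ≤ ⟨L - 1, by omega⟩ from Fin.le_def.2 (by simp; omega))) hb.le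
    have key := eq_natCast_and_eq_choose_of_sum_mul_rpow_eq_one_add_rpow
      (fun y => exp_pos (c y)) (hρ.mul_const hb) hρle fun t => sum_exp_mul_rpow_eq_one_add_rpow h
    have hbL : b = L - 1 := by simpa [hρlast, hL1] using (key ⟨L - 1, by omega⟩).1
    refine ⟨hbL, fun y => ?_, fun y => ?_⟩
    · rw [eq_div_iff hL1pos.ne', ← hbL, (key y).1]
    · rw [← Ring.choose_natCast, hL1, ← hbL, ← (key y).2, log_exp]
  · rintro ⟨rfl, hρy, hcy⟩ z
    have hterm (y : Fin L) :
        exp (c y + ρ y * (L - 1) * z) = (L - 1).choose y * exp z ^ (y : ℕ) := by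
      rw [hρy, hcy, div_mul_cancel₀ _ hL1pos.ne', exp_add,
        exp_log (Nat.cast_pos.2 (Nat.choose_pos (by omega))), ← exp_nat_mul]
    rw [← sum_div, sum_congr rfl fun y _ => hterm y, Fin.sum_choose_pred_mul_pow (by omega),
      ← hL1, rpow_natCast]
    exact div_self (by positivity)
end

section
/- In the adjacent-categories model with L ≥ 2 outcomes, parameters α_y = log(binomial(L-1,y)) and δ_y = y/(L-1), the expected score G(z) = (Σ_y δ_y e^{α_y + δ_y z}) / (Σ_y e^{α_y + δ_y z}) equals the logistic function L(z/(L-1)) = 1/(1 + e^{-z/(L-1)}) for all real z. -/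
theorem ac_expected_score_logistic (L : ℕ) (hL : 2 ≤ L) :
    ∀ z : ℝ,
      (∑ y : Fin L, ((y : ℝ) / (L - 1)) *
          Real.exp (Real.log (Nat.choose (L - 1) y) + ((y : ℝ) / (L - 1)) * z)) /
        (∑ y : Fin L,
          Real.exp (Real.log (Nat.choose (L - 1) y) + ((y : ℝ) / (L - 1)) * z))
      = 1 / (1 + Real.exp (-(z / (L - 1)))) := by
  obtain ⟨m, rfl⟩ : ∃ m, L = m + 2 := ⟨L - 2, by omega⟩
  intro z
  have hcast : ((m + 2 : ℕ) : ℝ) - 1 = (m : ℝ) + 1 := by push_cast; ring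
  have hm1 : ((m : ℝ) + 1) ≠ 0 := by positivity
  set x := Real.exp (z / ((m : ℝ) + 1)) with hxdef
  have hx : 0 < x := Real.exp_pos _
  have hnn : m + 2 - 1 = m + 1 := by omega
  have hterm : ∀ y : Fin (m + 2),
      Real.exp (Real.log (Nat.choose (m + 2 - 1) y) + ((y : ℝ) / (((m + 2 : ℕ) : ℝ) - 1)) * z)
        = (Nat.choose (m + 1) y : ℝ) * x ^ (y : ℕ) := by
    intro y
    have hc : 0 < ((Nat.choose (m + 1) y : ℕ) : ℝ) := by
      exact_mod_cast Nat.choose_pos (by omega : (y : ℕ) ≤ m + 1)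
    rw [hnn, hcast, Real.exp_add, Real.exp_log hc]
    congr 1
    rw [show ((y : ℝ) / ((m : ℝ) + 1)) * z = ((y : ℕ) : ℝ) * (z / ((m : ℝ) + 1)) by
      field_simp]
    rw [Real.exp_nat_mul]
  have hden : ∑ y : Fin (m + 2), (Nat.choose (m + 1) y : ℝ) * x ^ (y : ℕ)
      = (x + 1) ^ (m + 1) := by
    rw [add_pow, Fin.sum_univ_eq_sum_range (fun k => ((Nat.choose (m+1) k : ℕ) : ℝ) * x ^ k) (m+2)]
    apply Finset.sum_congr rfl
    intro k _
    simp [mul_comm]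
  have hnum : ∑ y : Fin (m + 2),
      ((y : ℝ) / (((m + 2 : ℕ) : ℝ) - 1)) * ((Nat.choose (m + 1) y : ℝ) * x ^ (y : ℕ))
      = x * (x + 1) ^ m := by
    rw [hcast, Fin.sum_univ_eq_sum_range (fun k => ((k:ℝ) / ((m:ℝ)+1)) * (((Nat.choose (m+1) k : ℕ) : ℝ) * x ^ k)) (m+2)]
    rw [Finset.sum_range_succ']
    simp only [Nat.cast_zero, zero_div, zero_mul, add_zero]
    have hstep : ∀ k ∈ Finset.range (m + 1),
        (((k + 1 : ℕ) : ℝ) / ((m : ℝ) + 1)) * ((Nat.choose (m + 1) (k + 1) : ℝ) * x ^ (k + 1))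
          = ((Nat.choose m k : ℝ) * x ^ k) * x := by
      intro k _
      have h : ((m + 1) * Nat.choose m k : ℕ) = Nat.choose (m + 1) (k + 1) * (k + 1) :=
        Nat.add_one_mul_choose_eq m k
      have h' : ((m : ℝ) + 1) * (Nat.choose m k : ℝ)
          = (Nat.choose (m + 1) (k + 1) : ℝ) * ((k : ℝ) + 1) := by exact_mod_cast h
      push_cast
      rw [div_mul_eq_mul_div, div_eq_iff hm1]
      linear_combination (-(x ^ (k + 1))) * h'
    rw [Finset.sum_congr rfl hstep, ← Finset.sum_mul]
    rw [add_pow]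
    rw [mul_comm]
    congr 1
    apply Finset.sum_congr rfl
    intro k _
    simp [mul_comm]
  calc (∑ y : Fin (m + 2), ((y : ℝ) / (((m + 2 : ℕ) : ℝ) - 1)) *
          Real.exp (Real.log (Nat.choose (m + 2 - 1) y) + ((y : ℝ) / (((m + 2 : ℕ) : ℝ) - 1)) * z)) /
        (∑ y : Fin (m + 2),
          Real.exp (Real.log (Nat.choose (m + 2 - 1) y) + ((y : ℝ) / (((m + 2 : ℕ) : ℝ) - 1)) * z))
      = (x * (x + 1) ^ m) / ((x + 1) ^ (m + 1)) := by
        rw [← hden, ← hnum]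
        congr 1
        · exact Finset.sum_congr rfl fun y _ => by rw [hterm y]
        · exact Finset.sum_congr rfl fun y _ => by rw [hterm y]
    _ = 1 / (1 + Real.exp (-(z / (((m + 2 : ℕ) : ℝ) - 1)))) := by
        rw [hcast, show Real.exp (-(z / ((m:ℝ) + 1))) = x⁻¹ by rw [Real.exp_neg]]
        have h1x : (0 : ℝ) < x + 1 := by linarith
        rw [pow_succ]
        field_simp
end

section
/- If the adjacent-categories parameters satisfy the symmetry conditions α_y = α_{L-1-y} and δ_y = 1 − δ_{L-1-y} for all y, then P_y(z) = P_{L-1-y}(−z) for all y and all real z, where P_y(z) = e^{α_y + δ_y z}/Σ_l e^{α_l + δ_l z}. -/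
theorem ac_symmetry (L : ℕ) (hL : 1 ≤ L) (α δ : Fin L → ℝ)
    (hα : ∀ y : Fin L, α y = α ⟨L - 1 - y, by omega⟩)
    (hδ : ∀ y : Fin L, δ y = 1 - δ ⟨L - 1 - y, by omega⟩) :
    ∀ (y : Fin L) (z : ℝ),
      Real.exp (α y + δ y * z) / (∑ l : Fin L, Real.exp (α l + δ l * z))
        = Real.exp (α ⟨L - 1 - y, by omega⟩ + δ ⟨L - 1 - y, by omega⟩ * (-z)) /
            (∑ l : Fin L, Real.exp (α l + δ l * (-z))) := by
  intro y z
  let e : Fin L ≃ Fin L :=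
    ⟨fun l => ⟨L - 1 - l, by omega⟩, fun l => ⟨L - 1 - l, by omega⟩,
      fun l => by ext; simp; omega, fun l => by ext; simp; omega⟩
  have hsum : (∑ l : Fin L, Real.exp (α l + δ l * (-z)))
      = (∑ l : Fin L, Real.exp (α l + δ l * z)) * Real.exp (-z) := by
    rw [Finset.sum_mul]
    refine Fintype.sum_equiv e _ _ fun l => ?_
    have h1 := hα l
    have h2 := hδ l
    simp only [e, Equiv.coe_fn_mk]
    rw [← h1]
    have : δ (⟨L - 1 - l, by omega⟩ : Fin L) = 1 - δ l := by rw [h2]; ring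
    rw [this, ← Real.exp_add]
    ring_nf
  have hnum : Real.exp (α ⟨L - 1 - y, by omega⟩ + δ ⟨L - 1 - y, by omega⟩ * (-z))
      = Real.exp (α y + δ y * z) * Real.exp (-z) := by
    rw [← hα y]
    have : δ (⟨L - 1 - y, by omega⟩ : Fin L) = 1 - δ y := by rw [hδ y]; ring
    rw [this, ← Real.exp_add]
    ring_nf
  rw [hsum, hnum, mul_div_mul_right _ _ (Real.exp_ne_zero _)]
end
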